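/- For i ≥ 1 and 1 ≤ r ≤ 2i+1, define v^r ∈ 𝔹^{2i+1} by: v^r_c = ⊥ if c = r; v^r_c = tt if c ≠ r and (c − r) mod (2i+1) is odd; v^r_c = ff if c ≠ r and (c − r) mod (2i+1) is even. Define the Gustave function G_i : 𝔹^{2i+1} → 𝔹 by G_i(x) = tt if v^r ≤ x for some r, and G_i(x) = ⊥ otherwise. Then G_i is monotone, π₁(tr G_i) = {v^1,…,v^{2i+1}}, the full set {v^1,…,v^{2i+1}} is linearly coherent, no subset of it of cardinality s with 2 ≤ s ≤ 2i is linearly coherent, and consequently cc(G_i) = 2i+1 and bcc(G_i) = ∞ (i.e. G_i has presequentiality level (∞, 2i)). -/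

import Mathlib

/-- The flat boolean domain: `⊥`, `tt`, `ff`. -/
abbrev Bb : Type := WithBot Bool

/-- The flat (domain) order on `Bb`: `⊥` below everything, `tt` and `ff` incomparable. -/
def bLE (a b : Bb) : Prop := a = ⊥ ∨ a = b

/-- Pointwise flat order on tuples. -/
def tupLE {k : ℕ} (x y : Fin k → Bb) : Prop := ∀ i, bLE (x i) (y i)

/-- Strict pointwise flat order on tuples. -/
def tupLT {k : ℕ} (x y : Fin k → Bb) : Prop := tupLE x y ∧ x ≠ y

/-- A first-order boolean function is monotone for the flat order. -/
def FlatMono {k : ℕ} (f : (Fin k → Bb) → Bb) : Prop :=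
  ∀ x y, tupLE x y → bLE (f x) (f y)

/-- The presequentiality relation `P^n_{A,B}` (indices `0,…,n-1`). -/
def Preseq (n : ℕ) (A B : Finset ℕ) : Set (Fin n → Bb) :=
  {d | (∃ i : Fin n, (i : ℕ) ∈ A ∧ d i = ⊥) ∨
       (∀ i j : Fin n, (i : ℕ) ∈ B → (j : ℕ) ∈ B → d i = d j)}

/-- `P^n_{m,m'}`: the presequentiality relation on initial segments. -/
def PreseqSeg (n m m' : ℕ) : Set (Fin n → Bb) :=
  Preseq n (Finset.range m) (Finset.range m')

/-- `f` (arity `k`) is invariant under an `n`-ary relation `R`. -/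
def Invariant {k n : ℕ} (f : (Fin k → Bb) → Bb) (R : Set (Fin n → Bb)) : Prop :=
  ∀ x : Fin k → Fin n → Bb, (∀ m, x m ∈ R) →
    (fun i => f (fun m => x m i)) ∈ R

/-- `π₁(tr f)`: the set of minimal points where `f` is defined. -/
def traceDom {k : ℕ} (f : (Fin k → Bb) → Bb) : Set (Fin k → Bb) :=
  {v | f v ≠ ⊥ ∧ ∀ v', tupLT v' v → f v' = ⊥}

/-- Linear coherence of a set of tuples. -/
def LinCoherent {k : ℕ} (S : Set (Fin k → Bb)) : Prop :=
  ∀ j : Fin k, (∀ v ∈ S, v j ≠ ⊥) → ∀ v ∈ S, ∀ w ∈ S, v j = w j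

/-- The coefficient of coherence `cc(f) ∈ ℕ∞`. -/
noncomputable def cc {k : ℕ} (f : (Fin k → Bb) → Bb) : ℕ∞ :=
  sInf {c : ℕ∞ | ∃ S : Finset (Fin k → Bb),
    ↑S ⊆ traceDom f ∧ 2 ≤ S.card ∧ LinCoherent (↑S : Set (Fin k → Bb)) ∧ c = (S.card : ℕ∞)}

/-- The bivalued coefficient of coherence `bcc(f) ∈ ℕ∞`. -/
noncomputable def bcc {k : ℕ} (f : (Fin k → Bb) → Bb) : ℕ∞ :=
  sInf {c : ℕ∞ | ∃ S : Finset (Fin k → Bb),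
    ↑S ⊆ traceDom f ∧ 3 ≤ S.card ∧ LinCoherent (↑S : Set (Fin k → Bb)) ∧
    (∃ v ∈ S, f v = ((true : Bool) : Bb)) ∧ (∃ v ∈ S, f v = ((false : Bool) : Bb)) ∧
    c = (S.card : ℕ∞)}

/-- M-sequentiality, by induction on the arity. -/
def MSeq : ∀ {k : ℕ}, ((Fin k → Bb) → Bb) → Prop
  | 0, f => ∃ b, ∀ x, f x = b
  | (k+1), f => (∃ b, ∀ x, f x = b) ∨
      ∃ i : Fin (k+1), (∀ x, x i = ⊥ → f x = ⊥) ∧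
        ∀ c : Bool, MSeq (fun x : Fin k → Bb => f (i.insertNth (c : Bb) x))

/-- The `r`-th trace element of the Gustave function of arity `2i+1`. -/
def gv (i : ℕ) (r : Fin (2 * i + 1)) : Fin (2 * i + 1) → Bb := fun c =>
  if c = r then ⊥
  else if (((c : ℕ) + (2 * i + 1) - (r : ℕ)) % (2 * i + 1)) % 2 = 1
  then ((true : Bool) : Bb)
  else ((false : Bool) : Bb)

open Classical in
/-- The Gustave function `G_i` of arity `2i+1`. -/
noncomputable def gust (i : ℕ) : (Fin (2 * i + 1) → Bb) → Bb := fun x =>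
  if ∃ r, tupLE (gv i r) x then ((true : Bool) : Bb) else ⊥

/- ======= auxiliary lemmas ======= -/

open Fin.CommRing

lemma tupLE_refl {k : ℕ} (x : Fin k → Bb) : tupLE x x := fun _ => Or.inr rfl

lemma tupLE_trans {k : ℕ} {x y z : Fin k → Bb} (h1 : tupLE x y) (h2 : tupLE y z) :
    tupLE x z := by
  intro j
  rcases h1 j with h | h
  · exact Or.inl h
  · rw [h]; exact h2 j

lemma tupLE_antisymm {k : ℕ} {x y : Fin k → Bb} (h1 : tupLE x y) (h2 : tupLE y x) :
    x = y := by
  funext j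
  rcases h1 j with h | h
  · rcases h2 j with h' | h'
    · rw [h, h']
    · rw [h']
  · exact h

lemma gv_self (i : ℕ) (r : Fin (2 * i + 1)) : gv i r r = ⊥ := if_pos rfl

lemma sub_val (i : ℕ) (c r : Fin (2 * i + 1)) :
    ((c : ℕ) + (2 * i + 1) - (r : ℕ)) % (2 * i + 1) = ((c - r : Fin (2 * i + 1)) : ℕ) := by
  rw [Fin.sub_def]
  have := r.isLt
  congr 1
  omega

lemma gv_eq (i : ℕ) (r c : Fin (2 * i + 1)) (h : c ≠ r) :
    gv i r c = if ((c - r : Fin (2 * i + 1)) : ℕ) % 2 = 1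
      then ((true : Bool) : Bb) else ((false : Bool) : Bb) := by
  rw [gv]
  rw [if_neg h, sub_val]

lemma gv_ne_bot (i : ℕ) (r c : Fin (2 * i + 1)) (h : c ≠ r) : gv i r c ≠ ⊥ := by
  rw [gv_eq i r c h]
  split_ifs <;> exact WithBot.coe_ne_bot

lemma gv_le (i : ℕ) {r r' : Fin (2 * i + 1)} (h : tupLE (gv i r) (gv i r')) : r = r' := by
  by_contra hne
  have h1 := h r'
  rw [gv_self] at h1
  have hb : gv i r r' = ⊥ := by rcases h1 with h' | h' <;> exact h'
  exact gv_ne_bot i r r' (fun he => hne he.symm) hb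

lemma gv_inj (i : ℕ) : Function.Injective (gv i) := by
  intro r r' h
  by_contra hne
  have h1 : gv i r' r = ⊥ := by rw [← h]; exact gv_self i r
  exact gv_ne_bot i r' r hne h1

lemma gust_spec (i : ℕ) (x : Fin (2 * i + 1) → Bb) :
    (gust i x = ((true : Bool) : Bb) ∧ ∃ r, tupLE (gv i r) x) ∨
    (gust i x = ⊥ ∧ ¬ ∃ r, tupLE (gv i r) x) := by
  unfold gust
  by_cases h : ∃ r, tupLE (gv i r) x
  · exact Or.inl ⟨if_pos h, h⟩
  · exact Or.inr ⟨if_neg h, h⟩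

lemma gust_gv (i : ℕ) (r : Fin (2 * i + 1)) : gust i (gv i r) = ((true : Bool) : Bb) := by
  rcases gust_spec i (gv i r) with ⟨h, _⟩ | ⟨_, hn⟩
  · exact h
  · exact absurd ⟨r, tupLE_refl _⟩ hn

lemma gust_mono (i : ℕ) : FlatMono (gust i) := by
  intro x y hxy
  rcases gust_spec i x with ⟨hx, r, hr⟩ | ⟨hx, _⟩
  · rcases gust_spec i y with ⟨hy, _⟩ | ⟨hy, hn⟩
    · exact Or.inr (by rw [hx, hy])
    · exact absurd ⟨r, tupLE_trans hr hxy⟩ hn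
  · exact Or.inl hx

lemma trace_eq (i : ℕ) : traceDom (gust i) = Set.range (gv i) := by
  ext v
  constructor
  · rintro ⟨hne, hmin⟩
    rcases gust_spec i v with ⟨_, r, hr⟩ | ⟨hb, _⟩
    · refine ⟨r, ?_⟩
      by_contra hne2
      have := hmin (gv i r) ⟨hr, hne2⟩
      rw [gust_gv] at this
      exact WithBot.coe_ne_bot this
    · exact absurd hb hne
  · rintro ⟨r, rfl⟩
    refine ⟨by rw [gust_gv]; exact WithBot.coe_ne_bot, ?_⟩
    rintro v' ⟨hle, hne⟩
    rcases gust_spec i v' with ⟨_, r', hr'⟩ | ⟨hb, _⟩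
    · have heq : r' = r := gv_le i (tupLE_trans hr' hle)
      subst heq
      exact absurd (tupLE_antisymm hr' hle).symm hne
    · exact hb

lemma lin_full (i : ℕ) : LinCoherent (Set.range (gv i)) := by
  intro j hbot v _ w _
  exact absurd (gv_self i j) (hbot (gv i j) ⟨j, rfl⟩)

/- ===== Fin arithmetic ===== -/

lemma val_one' (i : ℕ) (hi : 1 ≤ i) : ((1 : Fin (2 * i + 1)) : ℕ) = 1 := by
  have h := Fin.val_natCast 1 (2 * i + 1)
  rw [Nat.cast_one] at h
  rw [h, Nat.mod_eq_of_lt (by omega)]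

lemma val_two' (i : ℕ) (hi : 1 ≤ i) : ((2 : Fin (2 * i + 1)) : ℕ) = 2 := by
  have h := Fin.val_natCast 2 (2 * i + 1)
  rw [Nat.cast_ofNat] at h
  rw [h, Nat.mod_eq_of_lt (by omega)]

lemma val_neg' (i : ℕ) (x : Fin (2 * i + 1)) (hx : x ≠ 0) :
    ((-x : Fin (2 * i + 1)) : ℕ) = 2 * i + 1 - (x : ℕ) := by
  have hnx : -x = 0 - x := (zero_sub x).symm
  have h := (sub_val i 0 x).symm
  rw [← hnx] at h
  have hv : (x : ℕ) ≠ 0 := fun h0 => hx (Fin.ext h0)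
  have := x.isLt
  rw [h, Fin.val_zero, Nat.zero_add, Nat.mod_eq_of_lt (by omega)]

lemma one_ne_zero'' (i : ℕ) (hi : 1 ≤ i) : (1 : Fin (2 * i + 1)) ≠ 0 := by
  intro h
  have := congrArg Fin.val h
  rw [val_one' i hi, Fin.val_zero] at this
  exact one_ne_zero this

lemma two_ne_zero'' (i : ℕ) (hi : 1 ≤ i) : (2 : Fin (2 * i + 1)) ≠ 0 := by
  intro h
  have := congrArg Fin.val h
  rw [val_two' i hi, Fin.val_zero] at this
  exact two_ne_zero this

lemma val_succ' (i : ℕ) (hi : 1 ≤ i) (x : Fin (2 * i + 1)) (hx : x ≠ -1) :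
    ((x + 1 : Fin (2 * i + 1)) : ℕ) = (x : ℕ) + 1 := by
  have hlast : (x : ℕ) ≠ 2 * i := by
    intro h
    apply hx
    apply Fin.ext
    rw [h, val_neg' i 1 (one_ne_zero'' i hi), val_one' i hi]
    omega
  have hlt := x.isLt
  have h := congrArg Fin.val (Fin.add_def x 1)
  rw [h]
  show ((x : ℕ) + ((1 : Fin (2*i+1)) : ℕ)) % (2 * i + 1) = _
  rw [val_one' i hi, Nat.mod_eq_of_lt (by omega)]

/- ===== the key non-coherence lemma ===== -/

lemma not_lincoherent (i : ℕ) (hi : 1 ≤ i) (S : Finset (Fin (2 * i + 1) → Bb))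
    (hsub : ↑S ⊆ Set.range (gv i)) (h2 : 2 ≤ S.card) (hle : S.card ≤ 2 * i) :
    ¬ LinCoherent (↑S : Set (Fin (2 * i + 1) → Bb)) := by
  intro hcoh
  have hsub' : ∀ v ∈ S, ∃ r, gv i r = v := fun v hv => hsub (Finset.mem_coe.mpr hv)
  -- complement nonempty
  obtain ⟨c, hc⟩ : ∃ c : Fin (2 * i + 1), gv i c ∉ S := by
    by_contra h
    push_neg at h
    have hss : Finset.image (gv i) Finset.univ ⊆ S := by
      intro v hv
      rw [Finset.mem_image] at hv
      obtain ⟨r, -, rfl⟩ := hv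
      exact h r
    have hcard := Finset.card_le_card hss
    rw [Finset.card_image_of_injective _ (gv_inj i), Finset.card_univ, Fintype.card_fin] at hcard
    omega
  -- some element
  obtain ⟨v0, hv0⟩ := Finset.card_pos.mp (by omega : 0 < S.card)
  obtain ⟨r0, hr0⟩ := hsub' v0 hv0
  -- boundary
  obtain ⟨j, hj, hj1⟩ : ∃ j : Fin (2 * i + 1), gv i j ∉ S ∧ gv i (j + 1) ∈ S := by
    by_contra h
    push_neg at h
    have key : ∀ t : ℕ, gv i (c + (t : Fin (2 * i + 1))) ∉ S := by
      intro t
      induction t with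
      | zero => simpa using hc
      | succ t ih =>
        have he : ((t + 1 : ℕ) : Fin (2 * i + 1)) = (t : Fin (2 * i + 1)) + 1 := by
          push_cast; ring
        rw [he, ← add_assoc]
        exact h _ ih
    have hk := key ((r0 - c : Fin (2 * i + 1)) : ℕ)
    rw [Fin.cast_val_eq_self] at hk
    have heq : c + (r0 - c) = r0 := by ring
    rw [heq] at hk
    exact hk (hr0 ▸ hv0)
  have memne : ∀ r : Fin (2 * i + 1), gv i r ∈ S → r ≠ j := fun r hr he => hj (he ▸ hr)
  have hjbot : ∀ v ∈ (↑S : Set (Fin (2 * i + 1) → Bb)), v j ≠ ⊥ := by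
    intro v hv
    obtain ⟨r, rfl⟩ := hsub hv
    exact gv_ne_bot i r j (fun he => (memne r (Finset.mem_coe.mp hv)) he.symm)
  -- step A: all members of S are "even" at j
  have stepA : ∀ r : Fin (2 * i + 1), gv i r ∈ S → ((j - r : Fin (2 * i + 1)) : ℕ) % 2 = 0 := by
    intro r hr
    have hco := hcoh j hjbot (gv i r) (Finset.mem_coe.mpr hr) (gv i (j + 1))
      (Finset.mem_coe.mpr hj1)
    have hne1 : j ≠ j + 1 := fun he => (memne (j + 1) hj1) he.symm
    have e1 : ((j - (j + 1) : Fin (2 * i + 1)) : ℕ) = 2 * i := by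
      have he : j - (j + 1) = -(1 : Fin (2 * i + 1)) := by ring
      rw [he, val_neg' i 1 (one_ne_zero'' i hi), val_one' i hi]
      omega
    have hnejr : j ≠ r := fun he => (memne r hr) he.symm
    rw [gv_eq i r j hnejr, gv_eq i (j + 1) j hne1, e1] at hco
    by_contra hodd
    have h1 : ((j - r : Fin (2 * i + 1)) : ℕ) % 2 = 1 := by omega
    rw [if_pos h1, if_neg (show ¬ (2 * i) % 2 = 1 by omega)] at hco
    exact Bool.noConfusion (WithBot.coe_inj.mp hco)
  -- second element r2 ≠ j+1
  obtain ⟨r2, hr2S, hr2ne⟩ : ∃ r2 : Fin (2 * i + 1), gv i r2 ∈ S ∧ r2 ≠ j + 1 := by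
    obtain ⟨v, hv, w, hw, hvw⟩ := Finset.one_lt_card.mp (by omega : 1 < S.card)
    obtain ⟨a, rfl⟩ := hsub' v hv
    obtain ⟨b, rfl⟩ := hsub' w hw
    by_cases ha : a = j + 1
    · exact ⟨b, hw, fun hb => hvw (by rw [ha, hb])⟩
    · exact ⟨a, hv, ha⟩
  -- j+2 is not in S
  have hj2 : gv i (j + 2) ∉ S := by
    intro hmem
    have hp := stepA _ hmem
    have e2 : ((j - (j + 2) : Fin (2 * i + 1)) : ℕ) = 2 * i - 1 := by
      have he : j - (j + 2) = -(2 : Fin (2 * i + 1)) := by ring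
      rw [he, val_neg' i 2 (two_ne_zero'' i hi), val_two' i hi]
      omega
    rw [e2] at hp
    omega
  have hj2bot : ∀ v ∈ (↑S : Set (Fin (2 * i + 1) → Bb)), v (j + 2) ≠ ⊥ := by
    intro v hv
    obtain ⟨r, rfl⟩ := hsub hv
    refine gv_ne_bot i r (j + 2) (fun he => hj2 ?_)
    rw [he]
    exact Finset.mem_coe.mp hv
  have hco2 := hcoh (j + 2) hj2bot (gv i (j + 1)) (Finset.mem_coe.mpr hj1) (gv i r2)
    (Finset.mem_coe.mpr hr2S)
  have ea : (((j + 2) - (j + 1) : Fin (2 * i + 1)) : ℕ) = 1 := by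
    have he : (j + 2) - (j + 1) = (1 : Fin (2 * i + 1)) := by ring
    rw [he, val_one' i hi]
  have p0 : ((j - r2 : Fin (2 * i + 1)) : ℕ) % 2 = 0 := stepA _ hr2S
  have hj2ne : r2 ≠ j + 2 := fun h => hj2 (h ▸ hr2S)
  have p1 : (((j + 1) - r2 : Fin (2 * i + 1)) : ℕ) = ((j - r2 : Fin (2 * i + 1)) : ℕ) + 1 := by
    have hx : j - r2 ≠ -1 := by
      intro h
      exact hr2ne (by linear_combination -h)
    have he : (j + 1) - r2 = (j - r2) + 1 := by ring
    rw [he, val_succ' i hi _ hx]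
  have p2 : (((j + 2) - r2 : Fin (2 * i + 1)) : ℕ)
      = (((j + 1) - r2 : Fin (2 * i + 1)) : ℕ) + 1 := by
    have hx : (j + 1) - r2 ≠ -1 := by
      intro h
      exact hj2ne (by linear_combination -h)
    have he : (j + 2) - r2 = ((j + 1) - r2) + 1 := by ring
    rw [he, val_succ' i hi _ hx]
  have hne_a : (j + 2) ≠ (j + 1) := by
    intro h
    have h21 : (2 : Fin (2 * i + 1)) = 1 := by linear_combination h
    have := congrArg Fin.val h21
    rw [val_two' i hi, val_one' i hi] at this
    omega
  have hne_b : (j + 2) ≠ r2 := fun h => hj2ne h.symm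
  rw [gv_eq i (j + 1) (j + 2) hne_a, gv_eq i r2 (j + 2) hne_b, ea] at hco2
  have hpar : (((j + 2) - r2 : Fin (2 * i + 1)) : ℕ) % 2 = 0 := by
    rw [p2, p1]; omega
  rw [if_pos (show (1 : ℕ) % 2 = 1 by norm_num),
    if_neg (show ¬ (((j + 2) - r2 : Fin (2 * i + 1)) : ℕ) % 2 = 1 by omega)] at hco2
  exact Bool.noConfusion (WithBot.coe_inj.mp hco2)

lemma cc_eq (i : ℕ) (hi : 1 ≤ i) : cc (gust i) = ((2 * i + 1 : ℕ) : ℕ∞) := by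
  have hset : {c : ℕ∞ | ∃ S : Finset (Fin (2 * i + 1) → Bb),
      ↑S ⊆ traceDom (gust i) ∧ 2 ≤ S.card ∧
      LinCoherent (↑S : Set (Fin (2 * i + 1) → Bb)) ∧ c = (S.card : ℕ∞)}
      = {((2 * i + 1 : ℕ) : ℕ∞)} := by
    ext c
    simp only [Set.mem_setOf_eq, Set.mem_singleton_iff]
    constructor
    · rintro ⟨S, hsub, h2, hcoh, rfl⟩
      rw [trace_eq i] at hsub
      have hub : S.card ≤ 2 * i + 1 := by
        have hss : S ⊆ Finset.image (gv i) Finset.univ := by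
          intro v hv
          obtain ⟨r, hr⟩ := hsub (Finset.mem_coe.mpr hv)
          exact Finset.mem_image.mpr ⟨r, Finset.mem_univ r, hr⟩
        have := Finset.card_le_card hss
        rwa [Finset.card_image_of_injective _ (gv_inj i), Finset.card_univ,
          Fintype.card_fin] at this
      have hlb : ¬ S.card ≤ 2 * i := fun h => not_lincoherent i hi S hsub h2 h hcoh
      have : S.card = 2 * i + 1 := by omega
      rw [this]
    · rintro rfl
      refine ⟨Finset.image (gv i) Finset.univ, ?_, ?_, ?_, ?_⟩
      · rw [trace_eq i, Finset.coe_image, Finset.coe_univ, Set.image_univ]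
      · rw [Finset.card_image_of_injective _ (gv_inj i), Finset.card_univ, Fintype.card_fin]
        omega
      · rw [Finset.coe_image, Finset.coe_univ, Set.image_univ]
        exact lin_full i
      · rw [Finset.card_image_of_injective _ (gv_inj i), Finset.card_univ, Fintype.card_fin]
  rw [cc, hset, sInf_singleton]

lemma bcc_eq (i : ℕ) : bcc (gust i) = ⊤ := by
  rw [bcc]
  rw [sInf_eq_top]
  intro c hc
  exfalso
  revert hc
  simp only [Set.mem_setOf_eq, Set.mem_empty_iff_false, iff_false]
  rintro ⟨S, -, -, -, -, ⟨v, -, hfv⟩, -⟩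
  rcases gust_spec i v with ⟨h, -⟩ | ⟨h, -⟩ <;> rw [h] at hfv
  · exact Bool.noConfusion (WithBot.coe_inj.mp hfv)
  · exact WithBot.bot_ne_coe hfv


/-- properties of the Gustave function `G_i` for `i ≥ 1`. -/
theorem stmt_17 (i : ℕ) (hi : 1 ≤ i) :
    FlatMono (gust i) ∧
    traceDom (gust i) = Set.range (gv i) ∧
    LinCoherent (Set.range (gv i)) ∧
    (∀ S : Finset (Fin (2 * i + 1) → Bb), ↑S ⊆ Set.range (gv i) →
      2 ≤ S.card → S.card ≤ 2 * i → ¬ LinCoherent (↑S : Set (Fin (2 * i + 1) → Bb))) ∧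
    cc (gust i) = ((2 * i + 1 : ℕ) : ℕ∞) ∧
    bcc (gust i) = ⊤ := by
  exact ⟨gust_mono i, trace_eq i, lin_full i,
    fun S h1 h2 h3 => not_lincoherent i hi S h1 h2 h3, cc_eq i hi, bcc_eq i⟩
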